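/- arXiv:1704.06097 — 2 statements merged into one kernel-verified Lean document; each statement's English description precedes it below -/
import Mathlib

section
/- Let G be a group, σ : G → G an involutive automorphism, and H a σ-stable subgroup of G. Let g₁, g₂ ∈ G be such that σ(g₁)⁻¹·g₁ ∈ H and σ(g₂)⁻¹·g₂ ∈ H (i.e., the cosets g₁H and g₂H are fixed by the induced action of σ on G/H). Then there exists g ∈ G with σ(g) = g and g·g₁H = g₂H if and only if there exists h ∈ H with σ(g₂)⁻¹·g₂ = σ(h)⁻¹·(σ(g₁)⁻¹·g₁)·h. -/
/-- Orbit criterion: two `σ`-fixed cosets `g₁H`, `g₂H` lie in the same orbit of the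
group `G^σ` of `σ`-fixed elements if and only if the associated Galois 1-cocycles
`σ(gᵢ)⁻¹·gᵢ ∈ H` are twisted-conjugate in `H`. -/
theorem real_orbit_iff_twisted_conjugate {G : Type*} [Group G] (σ : G ≃* G)
    (hσ : ∀ g : G, σ (σ g) = g) (H : Subgroup G) (hH : ∀ h ∈ H, σ h ∈ H)
    (g₁ g₂ : G) (h₁ : (σ g₁)⁻¹ * g₁ ∈ H) (h₂ : (σ g₂)⁻¹ * g₂ ∈ H) :
    (∃ g : G, σ g = g ∧ ∃ h ∈ H, g * g₁ * h = g₂) ↔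
    (∃ h ∈ H, (σ g₂)⁻¹ * g₂ = (σ h)⁻¹ * ((σ g₁)⁻¹ * g₁) * h) := by
  constructor
  · rintro ⟨g, hg, h, hh, rfl⟩
    refine ⟨h, hh, ?_⟩
    simp only [map_mul]
    rw [hg]
    group
  · rintro ⟨h, hh, heq⟩
    refine ⟨g₂ * h⁻¹ * g₁⁻¹, ?_, h, hh, by group⟩
    have heq' : g₂⁻¹ * σ g₂ = h⁻¹ * (g₁⁻¹ * σ g₁) * σ h := by
      have := congrArg (·⁻¹) heq
      simpa [mul_assoc] using this
    simp only [map_mul, map_inv]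
    calc σ g₂ * (σ h)⁻¹ * (σ g₁)⁻¹
        = g₂ * (g₂⁻¹ * σ g₂ * (σ h)⁻¹) * (σ g₁)⁻¹ := by group
      _ = g₂ * h⁻¹ * g₁⁻¹ := by rw [heq']; group
end

section
/- Let 𝔤 be a finite-dimensional semisimple Lie algebra over ℂ equipped with two commuting involutive Lie algebra automorphisms θ and ω such that {x ∈ 𝔤 : θ(x) = −x and ω(x) = −x} = 0. Then there exist Lie ideals I and J of 𝔤, each stable under both θ and ω, such that 𝔤 = I ⊕ J, θ fixes I pointwise, and ω fixes J pointwise. -/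
/-!
Let `P` be the `(−1)`-eigenspace of `θ`. Since `θ` is an involution, `𝔤 = 𝔤^θ ⊕ P` with
`⁅𝔤^θ, P⁆ ⊆ P`, so the Lie subalgebra generated by `P` is already an ideal `J`. The vanishing of
the common `(−1)`-eigenspace forces `ω` to fix `P` pointwise, hence to fix `J` pointwise. In a
semisimple Lie algebra the complement `I = Jᶜ` is the centralizer of `J`; as `θ` and `ω` map `J`
onto itself, they stabilise `I`, and `θ` fixes `I` pointwise because `x - θ x ∈ P ⊆ J`.
-/

theorem Function.Involutive.apply_sub_apply_eq_neg {F M : Type*} [AddCommGroup M]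
    [FunLike F M M] [AddMonoidHomClass F M M] {f : F} (hf : Function.Involutive f) (x : M) :
    f (x - f x) = -(x - f x) := by
  rw [map_sub, hf, neg_sub]

theorem apply_eq_self_of_apply_eq_neg {F M : Type*} [AddCommGroup M] [FunLike F M M]
    [AddMonoidHomClass F M M] {f g : F} (hg : Function.Involutive g)
    (hcomm : ∀ x, f (g x) = g (f x)) (hfg : ∀ x, f x = -x → g x = -x → x = 0)
    {p : M} (hp : f p = -p) : g p = p := by
  refine (sub_eq_zero.mp (hfg _ ?_ (hg.apply_sub_apply_eq_neg p))).symm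
  rw [map_sub, hcomm, hp, map_neg]
  abel

namespace LieSubalgebra

variable {R L : Type*} [CommRing R] [LieRing L] [LieAlgebra R L]

theorem lie_mem_lieSpan_of_forall_lie_mem {s : Set L} {k : L}
    (hk : ∀ p ∈ s, ⁅k, p⁆ ∈ lieSpan R L s) {y : L} (hy : y ∈ lieSpan R L s) :
    ⁅k, y⁆ ∈ lieSpan R L s := by
  induction hy using lieSpan_induction with
  | mem p hp => exact hk p hp
  | zero => simp
  | add a b _ _ ha hb => rw [lie_add]; exact add_mem ha hb
  | smul t a _ ha => rw [lie_smul]; exact (lieSpan R L s).smul_mem t ha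
  | lie a b ha' hb' ha hb =>
    rw [leibniz_lie]
    exact add_mem (lie_mem _ ha hb') (lie_mem _ ha' hb)

theorem apply_eq_self_of_mem_lieSpan {s : Set L} (e : L →ₗ⁅R⁆ L) (he : ∀ p ∈ s, e p = p)
    {y : L} (hy : y ∈ lieSpan R L s) : e y = y := by
  induction hy using lieSpan_induction with
  | mem p hp => exact he p hp
  | zero => exact map_zero e
  | add a b _ _ ha hb => rw [map_add, ha, hb]
  | smul t a _ ha => rw [map_smul, ha]
  | lie a b _ _ ha hb => rw [e.map_lie, ha, hb]

theorem lie_mem_lieSpan_setOf_apply_eq_neg [Invertible (2 : R)] {θ : L ≃ₗ⁅R⁆ L}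
    (hθ : Function.Involutive θ) (x : L) {y : L} (hy : y ∈ lieSpan R L {p | θ p = -p}) :
    ⁅x, y⁆ ∈ lieSpan R L {p | θ p = -p} := by
  have hx : x = (⅟2 : R) • ((x + θ x) + (x - θ x)) := by
    rw [add_add_sub_cancel, ← two_smul R, smul_smul, invOf_mul_self, one_smul]
  have heven : ⁅x + θ x, y⁆ ∈ lieSpan R L {p | θ p = -p} := by
    refine lie_mem_lieSpan_of_forall_lie_mem (fun p hp => subset_lieSpan ?_) hy
    change θ p = -p at hp
    change θ ⁅x + θ x, p⁆ = -⁅x + θ x, p⁆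
    rw [θ.map_lie, hp, map_add, hθ, add_comm (θ x), lie_neg]
  have hodd : ⁅x - θ x, y⁆ ∈ lieSpan R L {p | θ p = -p} :=
    lie_mem _ (subset_lieSpan (hθ.apply_sub_apply_eq_neg x)) hy
  rw [hx, smul_lie, add_lie]
  exact (lieSpan R L _).smul_mem _ (add_mem heven hodd)

end LieSubalgebra

namespace LieIdeal

variable {R L : Type*} [CommRing R] [LieRing L] [LieAlgebra R L]

theorem exists_forall_apply_eq_self_of_commute_involutive [Invertible (2 : R)]
    {θ ω : L ≃ₗ⁅R⁆ L} (hθ : Function.Involutive θ) (hω : Function.Involutive ω)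
    (hcomm : ∀ x, θ (ω x) = ω (θ x)) (heig : ∀ x, θ x = -x → ω x = -x → x = 0) :
    ∃ J : LieIdeal R L, (∀ p, θ p = -p → p ∈ J) ∧ ∀ x ∈ J, ω x = x := by
  obtain ⟨J, hJ⟩ := (LieSubalgebra.exists_lieIdeal_coe_eq_iff R _).mpr
    fun x _ hy => LieSubalgebra.lie_mem_lieSpan_setOf_apply_eq_neg hθ x hy
  have hmem (x : L) : x ∈ J ↔ x ∈ LieSubalgebra.lieSpan R L {p | θ p = -p} := by
    rw [← hJ, LieIdeal.mem_toLieSubalgebra]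
  refine ⟨J, fun p hp => (hmem p).mpr (LieSubalgebra.subset_lieSpan hp), fun x hx => ?_⟩
  exact LieSubalgebra.apply_eq_self_of_mem_lieSpan ω.toLieHom
    (fun p hp => apply_eq_self_of_apply_eq_neg hω hcomm heig hp) ((hmem x).mp hx)

theorem lie_eq_zero_of_disjoint {I J : LieIdeal R L} (h : Disjoint I J) {x y : L}
    (hx : x ∈ I) (hy : y ∈ J) : ⁅x, y⁆ = 0 := by
  have : ⁅x, y⁆ ∈ I ⊓ J := LieSubmodule.lie_le_inf I J (LieSubmodule.lie_mem_lie hx hy)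
  rwa [h.eq_bot, LieSubmodule.mem_bot] at this

theorem mem_iff_forall_lie_eq_zero_of_isCompl [LieAlgebra.HasTrivialRadical R L]
    {I J : LieIdeal R L} (h : IsCompl I J) {x : L} :
    x ∈ I ↔ ∀ y ∈ J, ⁅x, y⁆ = 0 := by
  refine ⟨fun hx y hy => lie_eq_zero_of_disjoint h.disjoint hx hy, fun hx => ?_⟩
  obtain ⟨i, hi, j, hj, rfl⟩ := (LieSubmodule.mem_sup I J x).mp (h.sup_eq_top ▸ trivial)
  suffices hcen : j ∈ LieAlgebra.center R L by
    rw [LieAlgebra.center_eq_bot, LieSubmodule.mem_bot] at hcen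
    rwa [hcen, add_zero]
  intro z
  obtain ⟨i', hi', j', hj', rfl⟩ := (LieSubmodule.mem_sup I J z).mp (h.sup_eq_top ▸ trivial)
  have hij : ⁅j', i + j⁆ = 0 := by rw [← lie_skew, hx j' hj', neg_zero]
  have hji : ⁅j', i⁆ = 0 := by
    rw [← lie_skew, lie_eq_zero_of_disjoint h.disjoint hi hj', neg_zero]
  rw [lie_add, hji, zero_add] at hij
  rw [add_lie, lie_eq_zero_of_disjoint h.disjoint hi' hj, hij, add_zero]

theorem apply_mem_of_isCompl [LieAlgebra.HasTrivialRadical R L] {I J : LieIdeal R L}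
    (h : IsCompl I J) (e : L →ₗ⁅R⁆ L) (he : ∀ y ∈ J, ∃ z ∈ J, e z = y) {x : L} (hx : x ∈ I) :
    e x ∈ I := by
  rw [mem_iff_forall_lie_eq_zero_of_isCompl h]
  intro y hy
  obtain ⟨z, hz, rfl⟩ := he y hy
  rw [← e.map_lie, lie_eq_zero_of_disjoint h.disjoint hx hz, map_zero]

end LieIdeal

theorem decomposition_of_commuting_involutions_general {L : Type*} [LieRing L] [LieAlgebra ℂ L]
    [LieAlgebra.IsSemisimple ℂ L]
    (θ ω : L ≃ₗ⁅ℂ⁆ L)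
    (hθ : ∀ x : L, θ (θ x) = x) (hω : ∀ x : L, ω (ω x) = x)
    (hcomm : ∀ x : L, θ (ω x) = ω (θ x))
    (heig : ∀ x : L, θ x = -x → ω x = -x → x = 0) :
    ∃ I J : LieIdeal ℂ L,
      (∀ x ∈ I, θ x ∈ I) ∧ (∀ x ∈ I, ω x ∈ I) ∧
      (∀ x ∈ J, θ x ∈ J) ∧ (∀ x ∈ J, ω x ∈ J) ∧
      I ⊔ J = ⊤ ∧ I ⊓ J = ⊥ ∧
      (∀ x ∈ I, θ x = x) ∧ (∀ x ∈ J, ω x = x) := by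
  obtain ⟨J, hPJ, hωJ⟩ :=
    LieIdeal.exists_forall_apply_eq_self_of_commute_involutive hθ hω hcomm heig
  have hsubJ (x : L) : x - θ x ∈ J := hPJ _ (Function.Involutive.apply_sub_apply_eq_neg hθ x)
  have hθJ (x : L) (hx : x ∈ J) : θ x ∈ J := by simpa using sub_mem hx (hsubJ x)
  have hθI (x : L) (hx : x ∈ Jᶜ) : θ x ∈ Jᶜ :=
    LieIdeal.apply_mem_of_isCompl isCompl_compl.symm θ.toLieHom
      (fun y hy => ⟨θ y, hθJ y hy, hθ y⟩) hx
  have hωI (x : L) (hx : x ∈ Jᶜ) : ω x ∈ Jᶜ :=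
    LieIdeal.apply_mem_of_isCompl isCompl_compl.symm ω.toLieHom
      (fun y hy => ⟨y, hy, hωJ y hy⟩) hx
  refine ⟨Jᶜ, J, hθI, hωI, hθJ, fun x hx => (hωJ x hx).symm ▸ hx, compl_sup_eq_top,
    compl_inf_eq_bot, fun x hx => ?_, hωJ⟩
  have hdiff : x - θ x ∈ Jᶜ ⊓ J := ⟨sub_mem hx (hθI x hx), hsubJ x⟩
  rw [compl_inf_eq_bot, LieSubmodule.mem_bot, sub_eq_zero] at hdiff
  exact hdiff.symm

/-- If `θ`, `ω` are commuting involutive automorphisms of a finite-dimensional complex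
semisimple Lie algebra `𝔤` whose common `(−1)`-eigenspace vanishes, then `𝔤` decomposes
as a direct sum of `(θ,ω)`-stable ideals `I ⊕ J` with `θ` fixing `I` pointwise and `ω`
fixing `J` pointwise. -/
theorem decomposition_of_commuting_involutions {L : Type*} [LieRing L] [LieAlgebra ℂ L]
    [FiniteDimensional ℂ L] [LieAlgebra.IsSemisimple ℂ L]
    (θ ω : L ≃ₗ⁅ℂ⁆ L)
    (hθ : ∀ x : L, θ (θ x) = x) (hω : ∀ x : L, ω (ω x) = x)
    (hcomm : ∀ x : L, θ (ω x) = ω (θ x))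
    (heig : ∀ x : L, θ x = -x → ω x = -x → x = 0) :
    ∃ I J : LieIdeal ℂ L,
      (∀ x ∈ I, θ x ∈ I) ∧ (∀ x ∈ I, ω x ∈ I) ∧
      (∀ x ∈ J, θ x ∈ J) ∧ (∀ x ∈ J, ω x ∈ J) ∧
      I ⊔ J = ⊤ ∧ I ⊓ J = ⊥ ∧
      (∀ x ∈ I, θ x = x) ∧ (∀ x ∈ J, ω x = x) :=
  decomposition_of_commuting_involutions_general θ ω hθ hω hcomm heig
end
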